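/- arXiv:math/0606477 — 5 statements merged into one kernel-verified Lean document; each statement's English description precedes it below -/
import Mathlib

section
/- Let d and e be integers with 0 ≤ e < d, and define a_i = C(d,i) − C(e,i) for 0 ≤ i ≤ d (with C(e,i)=0 for i>e). Then the sequence satisfies a_0 ≤ a_1 ≤ ⋯ ≤ a_{⌊(d+1)/2⌋} and a_{⌊(d+1)/2⌋} ≥ a_{⌊(d+1)/2⌋+1} ≥ ⋯ ≥ a_d. In particular, (a_0,…,a_d) is unimodal. -/
private lemma hdec (n k : ℕ) (h : n ≤ 2*k+1) : n.choose (k+1) ≤ n.choose k := by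
  have h1 := Nat.choose_succ_right_eq n k
  have h2 : n.choose (k+1) * (k+1) ≤ n.choose k * (k+1) := by
    rw [h1]; exact Nat.mul_le_mul_left _ (by omega)
  exact Nat.le_of_mul_le_mul_right h2 (by omega)

private lemma hinc (n k : ℕ) (h : 2*k+1 ≤ n) : n.choose k ≤ n.choose (k+1) := by
  have h1 := Nat.choose_succ_right_eq n k
  have h2 : n.choose k * (k+1) ≤ n.choose (k+1) * (k+1) := by
    rw [h1]; exact Nat.mul_le_mul_left _ (by omega)
  exact Nat.le_of_mul_le_mul_right h2 (by omega)

private lemma hstrict (d i : ℕ) (h1 : d ≤ 2*i) (h2 : i < d) :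
    d.choose (i+1) < d.choose i := by
  have h3 := Nat.choose_succ_right_eq d i
  have hp : 0 < d.choose i := Nat.choose_pos (le_of_lt h2)
  have h4 : d.choose (i+1) * (i+1) < d.choose i * (i+1) := by
    rw [h3]; exact (Nat.mul_lt_mul_left hp).mpr (by omega)
  exact Nat.lt_of_mul_lt_mul_right h4

private lemma pasc_le (n i : ℕ) (h : 2*i ≤ n+1) :
    (n+1).choose i ≤ n.choose i + n.choose i := by
  cases i with
  | zero => simp
  | succ k =>
    rw [Nat.choose_succ_succ]
    have := hinc n k (by omega)
    simp only [Nat.succ_eq_add_one] at *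
    omega

private lemma pasc_ge (n i : ℕ) (h : n+1 ≤ 2*i) :
    n.choose i + n.choose i ≤ (n+1).choose i := by
  cases i with
  | zero => omega
  | succ k =>
    rw [Nat.choose_succ_succ]
    have := hdec n k (by omega)
    simp only [Nat.succ_eq_add_one] at *
    omega

private lemma incInd (e i : ℕ) (hi : 2*i+1 ≤ e) :
    ∀ n, e ≤ n → e.choose (i+1) + n.choose i ≤ n.choose (i+1) + e.choose i := by
  intro n hn
  induction n, hn using Nat.le_induction with
  | base => omega
  | succ n hn ih =>
    have h1 : (n+1).choose (i+1) = n.choose i + n.choose (i+1) := Nat.choose_succ_succ n i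
    have h2 := pasc_le n i (by omega)
    omega

private lemma decInd (e i : ℕ) :
    ∀ n, e ≤ n → n ≤ 2*i → n.choose (i+1) + e.choose i ≤ n.choose i + e.choose (i+1) := by
  intro n hn
  induction n, hn using Nat.le_induction with
  | base => omega
  | succ n hn ih =>
    intro hle
    have ih' := ih (by omega)
    have h1 : (n+1).choose (i+1) = n.choose i + n.choose (i+1) := Nat.choose_succ_succ n i
    have h2 := pasc_ge n i (by omega)
    omega

/-- the sequence `a_i = C(d,i) - C(e,i)` (with `0 ≤ e < d`) weakly increases
up to index `⌊(d+1)/2⌋` and weakly decreases afterwards; in particular it is unimodal. -/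
theorem stmt_1 (d e : ℕ) (hde : e < d) (a : ℕ → ℤ)
    (ha : ∀ i, a i = (d.choose i : ℤ) - (e.choose i : ℤ)) :
    (∀ i, i < (d + 1) / 2 → a i ≤ a (i + 1)) ∧
    (∀ i, (d + 1) / 2 ≤ i → i < d → a (i + 1) ≤ a i) := by
  constructor
  · intro i hi
    have hd : 2*i+1 ≤ d := by omega
    have key : d.choose i + e.choose (i+1) ≤ d.choose (i+1) + e.choose i := by
      by_cases he : e ≤ 2*i
      · have h1 := hdec e i (by omega)
        have h2 := hinc d i hd
        omega
      · have := incInd e i (by omega) d (by omega)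
        omega
    rw [ha, ha]; omega
  · intro i hi hid
    have hd : d ≤ 2*i := by omega
    have key : d.choose (i+1) + e.choose i ≤ d.choose i + e.choose (i+1) := by
      by_cases he : i < e
      · exact decInd e i d (by omega) hd
      · have h0 : e.choose (i+1) = 0 := Nat.choose_eq_zero_of_lt (by omega)
        have h1 : e.choose i ≤ 1 := by
          rcases eq_or_lt_of_le (not_lt.mp he) with h | h
          · rw [← h, Nat.choose_self]
          · rw [Nat.choose_eq_zero_of_lt h]; omega
        have h2 := hstrict d i hd hid
        omega
    rw [ha, ha]; omega
end

section
/- Let Δ be a quasi-forest of dimension d−1 with leaf order F_{s+1}, F_s, …, F_1, where for each 1 ≤ j ≤ s, G_j is a branch of the leaf F_j in the subcomplex ⟨F_{s+1}, …, F_j⟩. Set δ_j = |F_j| and e_j = |F_j ∩ G_j|. Then ∑_{i=0}^{d} f_{i−1}(Δ) x^i = ∑_{j=1}^{s+1} (1+x)^{δ_j} − ∑_{j=1}^{s} (1+x)^{e_j}, where f_{−1}(Δ) = 1 and f_{i−1}(Δ) is the number of faces of Δ of cardinality i. -/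
open Polynomial Finset

/-- A (finite) simplicial complex, viewed as a downward-closed finite family of finsets. -/
def IsComplex (Δ : Finset (Finset ℕ)) : Prop :=
  ∀ F ∈ Δ, ∀ G ⊆ F, G ∈ Δ

/-- `F` is a facet (maximal face) of `Δ`. -/
def IsFacet (Δ : Finset (Finset ℕ)) (F : Finset ℕ) : Prop :=
  F ∈ Δ ∧ ∀ G ∈ Δ, F ⊆ G → G = F

/-- `F` is a leaf of `Δ` with branch `G`: `G ≠ F` is a facet and `H ∩ F ⊆ G ∩ F`
for every facet `H ≠ F`. -/
def IsLeafWithBranch (Δ : Finset (Finset ℕ)) (F G : Finset ℕ) : Prop :=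
  IsFacet Δ F ∧ IsFacet Δ G ∧ G ≠ F ∧
    ∀ H, IsFacet Δ H → H ≠ F → H ∩ F ⊆ G ∩ F

/-- The subcomplex `⟨F₁, …, F_q⟩` generated by a finite family of faces. -/
def gen (Fs : Finset (Finset ℕ)) : Finset (Finset ℕ) :=
  Fs.biUnion Finset.powerset

/-- `fnum Δ i` is the number of faces of `Δ` of cardinality `i` (so `fnum Δ i = f_{i-1}`). -/
def fnum (Δ : Finset (Finset ℕ)) (i : ℕ) : ℕ :=
  (Δ.filter (fun A => A.card = i)).card

lemma sum_powerset_pow (S : Finset ℕ) :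
    ∑ A ∈ S.powerset, (X : Polynomial ℤ) ^ A.card = (1 + X) ^ S.card := by
  have h := Finset.prod_add (fun _ : ℕ => (X : Polynomial ℤ)) (fun _ => (1:Polynomial ℤ)) S
  simp only [Finset.prod_const, one_pow, mul_one] at h
  rw [add_comm 1 (X : Polynomial ℤ), h]

/-- Lemma on quasi-forests, part (a): if `Δ` is a quasi-forest of dimension
`d-1` with leaf order `F_{s+1}, …, F_1` (here 0-indexed: `F j` is `F_{j+1}`), where for each
`1 ≤ j ≤ s` the facet `F_j` is a leaf of `⟨F_{s+1}, …, F_j⟩` with branch `G_j`, then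
`∑_{i=0}^d f_{i-1} x^i = ∑_{j=1}^{s+1} (1+x)^{|F_j|} - ∑_{j=1}^s (1+x)^{|F_j ∩ G_j|}`. -/
theorem stmt_7 (d s : ℕ) (Δ : Finset (Finset ℕ)) (F : Fin (s + 1) → Finset ℕ)
    (G : Fin s → Finset ℕ)
    (hcomp : IsComplex Δ) (hne : Δ.Nonempty)
    (hinj : Function.Injective F)
    (hfac : ∀ A, IsFacet Δ A ↔ ∃ j, F j = A)
    (hleaf : ∀ j : Fin s, IsLeafWithBranch
      (gen ((Finset.univ.filter (fun i => j.castSucc ≤ i)).image F))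
      (F j.castSucc) (G j))
    (hdim : ∀ A ∈ Δ, A.card ≤ d) (hdim' : ∃ A ∈ Δ, A.card = d) :
    ∑ i ∈ Finset.range (d + 1), Polynomial.C ((fnum Δ i : ℤ)) * Polynomial.X ^ i
      = ∑ j : Fin (s + 1), (1 + Polynomial.X : Polynomial ℤ) ^ (F j).card
        - ∑ j : Fin s, (1 + Polynomial.X : Polynomial ℤ) ^ ((F j.castSucc) ∩ (G j)).card := by

  classical
  have hFfac : ∀ i, IsFacet Δ (F i) := fun i => (hfac _).mpr ⟨i, rfl⟩
  have hFmem : ∀ i, F i ∈ Δ := fun i => (hFfac i).1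
  set Δt : ℕ → Finset (Finset ℕ) := fun t =>
    gen ((Finset.univ.filter (fun i : Fin (s+1) => t ≤ i.val)).image F) with hΔt
  have hmem : ∀ t A, A ∈ Δt t ↔ ∃ i : Fin (s+1), t ≤ i.val ∧ A ⊆ F i := by
    intro t A
    simp [hΔt, gen]
  have hsubI : ∀ i k : Fin (s+1), F i ⊆ F k → i = k := by
    intro i k h
    exact (hinj ((hFfac i).2 (F k) (hFmem k) h)).symm
  have hfacT : ∀ t (i : Fin (s+1)), t ≤ i.val → IsFacet (Δt t) (F i) := by
    intro t i hti
    refine ⟨(hmem t _).mpr ⟨i, hti, subset_rfl⟩, ?_⟩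
    intro H hH hFH
    obtain ⟨k, hk, hHk⟩ := (hmem t H).mp hH
    have hik : i = k := hsubI i k (hFH.trans hHk)
    subst hik
    exact subset_antisymm hHk hFH
  have hfacT' : ∀ t H, IsFacet (Δt t) H → ∃ i : Fin (s+1), t ≤ i.val ∧ F i = H := by
    intro t H hH
    obtain ⟨k, hk, hHk⟩ := (hmem t H).mp hH.1
    exact ⟨k, hk, hH.2 (F k) ((hmem t _).mpr ⟨k, hk, subset_rfl⟩) hHk⟩
  have hleaf' : ∀ j : Fin s, IsLeafWithBranch (Δt j.val) (F j.castSucc) (G j) := by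
    intro j
    have hfe : (Finset.univ.filter (fun i : Fin (s+1) => j.castSucc ≤ i)) =
        (Finset.univ.filter (fun i : Fin (s+1) => (j.val : ℕ) ≤ i.val)) := by
      apply Finset.filter_congr
      intro i _
      simp [Fin.le_def]
    have h := hleaf j
    rw [hfe] at h
    exact h
  have hunion : ∀ j : Fin s, Δt j.val = Δt (j.val + 1) ∪ (F j.castSucc).powerset := by
    intro j
    ext A
    simp only [Finset.mem_union, hmem, Finset.mem_powerset]
    constructor
    · rintro ⟨i, hi, hAi⟩
      rcases eq_or_lt_of_le hi with h | h
      · right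
        have he : i = j.castSucc := by
          apply Fin.ext
          simp [← h]
        rwa [he] at hAi
      · exact Or.inl ⟨i, h, hAi⟩
    · rintro (⟨i, hi, hAi⟩ | hA)
      · exact ⟨i, by omega, hAi⟩
      · exact ⟨j.castSucc, by simp, hA⟩
  have hinter : ∀ j : Fin s, Δt (j.val + 1) ∩ (F j.castSucc).powerset
      = (F j.castSucc ∩ G j).powerset := by
    intro j
    obtain ⟨hFc, hGc, hGF, hbr⟩ := hleaf' j
    ext A
    simp only [Finset.mem_inter, Finset.mem_powerset, hmem]
    constructor
    · rintro ⟨⟨i, hi, hAi⟩, hAF⟩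
      have hne : F i ≠ F j.castSucc := by
        intro h
        have h2 := hinj h
        have h3 : i.val = j.val := by rw [h2]; simp
        omega
      have hsub := hbr (F i) (hfacT j.val i (by omega)) hne
      intro a ha
      have h4 := hsub (Finset.mem_inter.mpr ⟨hAi ha, hAF ha⟩)
      simp only [Finset.mem_inter] at h4 ⊢
      tauto
    · intro hA
      obtain ⟨i, hi, hGi⟩ := hfacT' j.val (G j) hGc
      have hne : i.val ≠ j.val := by
        intro h
        apply hGF
        rw [← hGi]
        congr 1
        apply Fin.ext
        simp [h]
      refine ⟨⟨i, by omega, ?_⟩, fun a ha => (Finset.mem_inter.mp (hA ha)).1⟩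
      intro a ha
      rw [← hGi] at hA
      exact (Finset.mem_inter.mp (hA ha)).2
  have hstep : ∀ j : Fin s, (∑ A ∈ Δt j.val, (X : Polynomial ℤ) ^ A.card)
      = (∑ A ∈ Δt (j.val + 1), (X : Polynomial ℤ) ^ A.card)
        + (1+X)^(F j.castSucc).card - (1+X)^(F j.castSucc ∩ G j).card := by
    intro j
    have h1 := Finset.sum_union_inter (s₁ := Δt (j.val+1)) (s₂ := (F j.castSucc).powerset)
      (f := fun A => (X:Polynomial ℤ) ^ A.card)
    rw [← hunion j, hinter j, sum_powerset_pow, sum_powerset_pow] at h1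
    linear_combination h1
  have hfins1 : ∀ j : Fin s,
      (Finset.univ.filter (fun i : Fin (s+1) => j.val ≤ i.val))
      = insert j.castSucc (Finset.univ.filter (fun i : Fin (s+1) => j.val + 1 ≤ i.val)) := by
    intro j
    ext i
    simp only [Finset.mem_filter, Finset.mem_univ, true_and, Finset.mem_insert, Fin.ext_iff,
      Fin.coe_castSucc]
    omega
  have hfins2 : ∀ j : Fin s,
      (Finset.univ.filter (fun i : Fin s => j.val ≤ i.val))
      = insert j (Finset.univ.filter (fun i : Fin s => j.val + 1 ≤ i.val)) := by
    intro j
    ext i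
    simp only [Finset.mem_filter, Finset.mem_univ, true_and, Finset.mem_insert, Fin.ext_iff]
    omega
  have key : ∀ m t, t + m = s →
      (∑ A ∈ Δt t, (X:Polynomial ℤ) ^ A.card)
      = ∑ i ∈ Finset.univ.filter (fun i : Fin (s+1) => t ≤ i.val), (1+X)^(F i).card
        - ∑ j ∈ Finset.univ.filter (fun j : Fin s => t ≤ j.val),
            (1+X)^(F j.castSucc ∩ G j).card := by
    intro m
    induction m with
    | zero =>
      intro t ht
      have hts : t = s := by omega
      have hlast : (Finset.univ.filter (fun i : Fin (s+1) => t ≤ i.val))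
          = {(⟨s, by omega⟩ : Fin (s+1))} := by
        ext i
        have hi2 := i.isLt
        simp only [Finset.mem_filter, Finset.mem_univ, true_and, Finset.mem_singleton,
          Fin.ext_iff]
        omega
      have h2 : (Finset.univ.filter (fun j : Fin s => t ≤ j.val)) = ∅ := by
        ext j
        have hj2 := j.isLt
        simp only [Finset.mem_filter, Finset.mem_univ, true_and, Finset.notMem_empty,
          iff_false]
        omega
      have hD : Δt t = (F ⟨s, by omega⟩).powerset := by
        ext A
        simp only [hmem, Finset.mem_powerset]
        constructor
        · rintro ⟨i, hi, hAi⟩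
          have hie : i = ⟨s, by omega⟩ := by
            apply Fin.ext
            have hi2 := i.isLt
            show i.val = s
            omega
          rwa [hie] at hAi
        · intro hA
          exact ⟨⟨s, by omega⟩, by {show t ≤ s; omega}, hA⟩
      rw [hD, sum_powerset_pow, hlast, h2, Finset.sum_singleton, Finset.sum_empty, sub_zero]
    | succ m ih =>
      intro t ht
      have hts : t < s := by omega
      have hstep' := hstep ⟨t, hts⟩
      have hf1 := hfins1 ⟨t, hts⟩
      have hf2 := hfins2 ⟨t, hts⟩
      simp only [] at hstep' hf1 hf2
      rw [hstep', ih (t+1) (by omega), hf1, hf2, Finset.sum_insert (by simp),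
        Finset.sum_insert (by simp)]
      ring
  have hΔ0 : Δ = Δt 0 := by
    ext A
    rw [hmem]
    constructor
    · intro hA
      obtain ⟨B, hB, hmax⟩ := Finset.exists_max_image (Δ.filter (fun B => A ⊆ B))
        Finset.card ⟨A, by simp [hA]⟩
      simp only [Finset.mem_filter] at hB
      have hBfac : IsFacet Δ B := by
        refine ⟨hB.1, fun C hC hBC => ?_⟩
        have hCf : C ∈ Δ.filter (fun B => A ⊆ B) := by
          simp only [Finset.mem_filter]
          exact ⟨hC, hB.2.trans hBC⟩
        exact (Finset.eq_of_subset_of_card_le hBC (hmax C hCf)).symm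
      obtain ⟨i, hi⟩ := (hfac B).mp hBfac
      exact ⟨i, Nat.zero_le _, hi ▸ hB.2⟩
    · rintro ⟨i, _, hAi⟩
      exact hcomp (F i) (hFmem i) A hAi
  have hLHS : ∑ i ∈ Finset.range (d+1), Polynomial.C ((fnum Δ i : ℤ)) * Polynomial.X ^ i
      = ∑ A ∈ Δ, (X:Polynomial ℤ) ^ A.card := by
    rw [← Finset.sum_fiberwise_of_maps_to (g := Finset.card) (t := Finset.range (d+1))
        (fun A hA => Finset.mem_range.mpr (Nat.lt_succ_of_le (hdim A hA)))
        (fun A => (X:Polynomial ℤ)^A.card)]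
    apply Finset.sum_congr rfl
    intro i _
    rw [Finset.sum_congr rfl (fun A hA => by rw [(Finset.mem_filter.mp hA).2]),
        Finset.sum_const, fnum]
    simp only [nsmul_eq_mul]
    rw [map_natCast (Polynomial.C : ℤ →+* Polynomial ℤ)]
  rw [hLHS, hΔ0, key s 0 (by omega)]
  congr 1
  · apply Finset.sum_congr
    · ext i; simp
    · intros; rfl
  · apply Finset.sum_congr
    · ext i; simp
    · intros; rfl
end

section
/- Let Δ be a quasi-forest with leaf order F_{s+1}, …, F_1; for 1 ≤ j ≤ s let G_j be a branch of the leaf F_j in ⟨F_{s+1}, …, F_j⟩, and set δ_j = |F_j|, e_j = |F_j ∩ G_j|. Let k_1⋯k_{s+1} be a permutation of {1,…,s+1} with δ_{k_1} ≤ ⋯ ≤ δ_{k_{s+1}} = d and ℓ_1⋯ℓ_s a permutation of {1,…,s} with e_{ℓ_1} ≤ ⋯ ≤ e_{ℓ_s}. Then e_{ℓ_j} < δ_{k_j} for all 1 ≤ j ≤ s. -/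
open Polynomial Finset

/-- Counting lemma: given an upward "parent" map `b` on `{k,…,s-1}` (with `i < b i ≤ s`),
any proper subset `A` of the vertex set `{k,…,s}` injects into the set of edges incident
to `A`. -/
lemma count_aux (s : ℕ) (b : ℕ → ℕ) (hb : ∀ i, i < s → i < b i ∧ b i ≤ s) :
    ∀ n k, s - k = n → k ≤ s → ∀ A : Finset ℕ, A ⊆ Finset.Icc k s → A ≠ Finset.Icc k s →
      A.card ≤ ((Finset.Ico k s).filter (fun i => i ∈ A ∨ b i ∈ A)).card := by
  intro n
  induction n with
  | zero =>
    intro k hsk hk A hA hne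
    have hks : k = s := by omega
    subst hks
    rw [Finset.Icc_self] at hA hne
    rcases Finset.subset_singleton_iff.1 hA with rfl | rfl
    · simp
    · exact absurd rfl hne
  | succ n ih =>
    intro k hsk hk A hA hne
    have hks : k < s := by omega
    by_cases hkA : k ∈ A
    · set A' := A.erase k with hA'def
      have hA' : A' ⊆ Finset.Icc (k+1) s := by
        intro x hx
        have hx1 := Finset.mem_of_mem_erase hx
        have hx2 := Finset.ne_of_mem_erase hx
        have := Finset.mem_Icc.1 (hA hx1)
        exact Finset.mem_Icc.2 ⟨by omega, this.2⟩
      have hne' : A' ≠ Finset.Icc (k+1) s := by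
        intro h
        apply hne
        have : A = insert k A' := (Finset.insert_erase hkA).symm
        rw [this, h, Finset.Icc_add_one_left_eq_Ioc, Finset.Ioc_insert_left hk]
      have hIH := ih (k+1) (by omega) (by omega) A' hA' hne'
      have hcard : A.card = A'.card + 1 := by
        rw [hA'def, Finset.card_erase_of_mem hkA]
        have : 0 < A.card := Finset.card_pos.2 ⟨k, hkA⟩
        omega
      have hsub : insert k ((Finset.Ico (k+1) s).filter (fun i => i ∈ A' ∨ b i ∈ A'))
          ⊆ (Finset.Ico k s).filter (fun i => i ∈ A ∨ b i ∈ A) := by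
        intro x hx
        rcases Finset.mem_insert.1 hx with rfl | hx
        · exact Finset.mem_filter.2 ⟨Finset.mem_Ico.2 ⟨le_refl _, hks⟩, Or.inl hkA⟩
        · rw [Finset.mem_filter] at hx ⊢
          refine ⟨Finset.mem_Ico.2 ⟨?_, (Finset.mem_Ico.1 hx.1).2⟩, ?_⟩
          · have := (Finset.mem_Ico.1 hx.1).1; omega
          · rcases hx.2 with h | h
            · exact Or.inl (Finset.mem_of_mem_erase h)
            · exact Or.inr (Finset.mem_of_mem_erase h)
      have hk_notin : k ∉ (Finset.Ico (k+1) s).filter (fun i => i ∈ A' ∨ b i ∈ A') := by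
        intro h
        have := (Finset.mem_Ico.1 (Finset.mem_filter.1 h).1).1
        omega
      have := Finset.card_le_card hsub
      rw [Finset.card_insert_of_notMem hk_notin] at this
      omega
    · have hA2 : A ⊆ Finset.Icc (k+1) s := by
        intro x hx
        have := Finset.mem_Icc.1 (hA hx)
        have hxk : x ≠ k := fun h => hkA (h ▸ hx)
        exact Finset.mem_Icc.2 ⟨by omega, this.2⟩
      by_cases hfull : A = Finset.Icc (k+1) s
      · have hcardA : A.card = s - k := by rw [hfull, Nat.card_Icc]; omega
        have : (Finset.Ico k s).filter (fun i => i ∈ A ∨ b i ∈ A) = Finset.Ico k s := by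
          apply Finset.filter_true_of_mem
          intro i hi
          have hi' := Finset.mem_Ico.1 hi
          by_cases hik : i = k
          · subst hik
            right
            rw [hfull]
            exact Finset.mem_Icc.2 ⟨(hb _ hks).1, (hb _ hks).2⟩
          · left
            rw [hfull]
            exact Finset.mem_Icc.2 ⟨by omega, by omega⟩
        rw [this, Nat.card_Ico]
        omega
      · have hIH := ih (k+1) (by omega) (by omega) A hA2 hfull
        refine le_trans hIH (Finset.card_le_card ?_)
        apply Finset.filter_subset_filter
        apply Finset.Ico_subset_Ico <;> omega

/-- Lemma on quasi-forests, part (b): with the quasi-forest data of part (a),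
`δ_j = |F_j|`, `e_j = |F_j ∩ G_j|`, if `σ` sorts the `δ`'s increasingly with last value `d`
and `τ` sorts the `e`'s increasingly, then `e_{ℓ_j} < δ_{k_j}` for all `1 ≤ j ≤ s`. -/
theorem stmt_8 (d s : ℕ) (Δ : Finset (Finset ℕ)) (F : Fin (s + 1) → Finset ℕ)
    (G : Fin s → Finset ℕ)
    (hcomp : IsComplex Δ) (hne : Δ.Nonempty)
    (hinj : Function.Injective F)
    (hfac : ∀ A, IsFacet Δ A ↔ ∃ j, F j = A)
    (hleaf : ∀ j : Fin s, IsLeafWithBranch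
      (gen ((Finset.univ.filter (fun i => j.castSucc ≤ i)).image F))
      (F j.castSucc) (G j))
    (σ : Equiv.Perm (Fin (s + 1))) (τ : Equiv.Perm (Fin s))
    (hσ : Monotone (fun j => (F (σ j)).card))
    (hσd : (F (σ (Fin.last s))).card = d)
    (hτ : Monotone (fun j => ((F (τ j).castSucc) ∩ (G (τ j))).card)) :
    ∀ j : Fin s, ((F (τ j).castSucc) ∩ (G (τ j))).card < (F (σ j.castSucc)).card := by
  classical
  -- every F m is a facet of Δ
  have hfacΔ : ∀ m, IsFacet Δ (F m) := fun m => (hfac (F m)).2 ⟨m, rfl⟩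
  -- intersections of distinct F's are strictly smaller than each
  have hstrict : ∀ a c : Fin (s+1), a ≠ c →
      (F a ∩ F c).card < (F a).card ∧ (F a ∩ F c).card < (F c).card := by
    intro a c hac
    constructor <;> apply Finset.card_lt_card
    · refine ⟨Finset.inter_subset_left, fun h => ?_⟩
      have hsub : F a ⊆ F c := fun x hx => (Finset.mem_inter.1 (h hx)).2
      exact hac (hinj ((hfacΔ a).2 (F c) (hfacΔ c).1 hsub)).symm
    · refine ⟨Finset.inter_subset_right, fun h => ?_⟩
      have hsub : F c ⊆ F a := fun x hx => (Finset.mem_inter.1 (h hx)).1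
      exact hac (hinj ((hfacΔ c).2 (F a) (hfacΔ a).1 hsub))
  -- each branch is some F m with m > i
  have hbranch : ∀ i : Fin s, ∃ m : Fin (s+1), i.castSucc < m ∧ G i = F m := by
    intro i
    obtain ⟨hFf, hGf, hne', _⟩ := hleaf i
    obtain ⟨hGmem, hGmax⟩ := hGf
    rw [gen, Finset.mem_biUnion] at hGmem
    obtain ⟨a, ha, hGa⟩ := hGmem
    obtain ⟨m, hm, rfl⟩ := Finset.mem_image.1 ha
    have hmi : i.castSucc ≤ m := (Finset.mem_filter.1 hm).2
    have hFm : F m ∈ gen ((Finset.univ.filter (fun i' => i.castSucc ≤ i')).image F) := by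
      rw [gen, Finset.mem_biUnion]
      exact ⟨F m, Finset.mem_image.2 ⟨m, hm, rfl⟩, Finset.mem_powerset.2 (subset_refl _)⟩
    have hGm : F m = G i := hGmax (F m) hFm (Finset.mem_powerset.1 hGa)
    refine ⟨m, ?_, hGm.symm⟩
    rcases lt_or_eq_of_le hmi with h | h
    · exact h
    · exfalso; apply hne'; rw [← h] at hGm; exact hGm.symm
  intro j
  by_contra hcon
  push_neg at hcon
  set t := ((F (τ j).castSucc) ∩ (G (τ j))).card with ht
  have hmax : ∀ i : Fin (s + 1), (F i).card ≤ d := by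
    intro i
    calc (F i).card = (F (σ (σ.symm i))).card := by rw [σ.apply_symm_apply]
    _ ≤ (F (σ (Fin.last s))).card := hσ (Fin.le_last _)
    _ = d := hσd
  -- t < d
  have htd : t < d := by
    obtain ⟨m, hm, hGm⟩ := hbranch (τ j)
    have h1 : t < (F (τ j).castSucc).card := by
      rw [ht, hGm]
      exact (hstrict _ m (ne_of_lt hm)).1
    exact lt_of_lt_of_le h1 (hmax _)
  -- the branch index function
  set bF : Fin s → Fin (s+1) := fun i => Classical.choose (hbranch i) with hbF
  have hbFspec : ∀ i : Fin s, i.castSucc < bF i ∧ G i = F (bF i) :=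
    fun i => Classical.choose_spec (hbranch i)
  set bN : ℕ → ℕ := fun n => if h : n < s then (bF ⟨n, h⟩ : ℕ) else n + 1 with hbN
  have hbb : ∀ i, i < s → i < bN i ∧ bN i ≤ s := by
    intro n h
    have h1 := (hbFspec ⟨n, h⟩).1
    rw [Fin.lt_def] at h1
    simp only [hbN, dif_pos h]
    exact ⟨h1, Nat.lt_succ_iff.1 (bF ⟨n, h⟩).isLt⟩
  set A : Finset ℕ := (Finset.range (s+1)).filter
    (fun n => ∀ h : n < s + 1, (F ⟨n, h⟩).card ≤ t) with hA
  set B : Finset ℕ := (Finset.range s).filter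
    (fun n => ∀ h : n < s, ((F (⟨n, h⟩ : Fin s).castSucc) ∩ (G ⟨n, h⟩)).card < t) with hB
  have hIcc : Finset.Icc 0 s = Finset.range (s+1) := by
    rw [Finset.range_eq_Ico, Finset.Ico_add_one_right_eq_Icc]
  have hIco : Finset.Ico 0 s = Finset.range s := by rw [Finset.range_eq_Ico]
  have hAsub : A ⊆ Finset.Icc 0 s := by rw [hIcc]; exact Finset.filter_subset _ _
  have hAne : A ≠ Finset.Icc 0 s := by
    intro h
    have hmem : ((σ (Fin.last s) : Fin (s+1)) : ℕ) ∈ A := by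
      rw [h, hIcc, Finset.mem_range]
      exact (σ (Fin.last s)).isLt
    rw [hA, Finset.mem_filter] at hmem
    have h2 := hmem.2 (σ (Fin.last s)).isLt
    rw [Fin.eta, hσd] at h2
    omega
  -- edges incident to A lie in B
  have hBsub : (Finset.Ico 0 s).filter (fun i => i ∈ A ∨ bN i ∈ A) ⊆ B := by
    intro n hn
    rw [Finset.mem_filter, hIco, Finset.mem_range] at hn
    obtain ⟨hns, hor⟩ := hn
    rw [hB, Finset.mem_filter, Finset.mem_range]
    refine ⟨hns, fun h => ?_⟩
    have hne2 : (⟨n, h⟩ : Fin s).castSucc ≠ bF ⟨n, h⟩ := ne_of_lt (hbFspec ⟨n, h⟩).1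
    have hkey := hstrict ((⟨n, h⟩ : Fin s).castSucc) (bF ⟨n, h⟩) hne2
    rw [← (hbFspec ⟨n, h⟩).2] at hkey
    rcases hor with hmem | hmem
    · rw [hA, Finset.mem_filter] at hmem
      have hle := hmem.2 (by omega : n < s + 1)
      have : F (⟨n, (by omega : n < s + 1)⟩ : Fin (s+1)) = F ((⟨n, h⟩ : Fin s).castSucc) := rfl
      rw [this] at hle
      exact lt_of_lt_of_le hkey.1 hle
    · rw [hA, Finset.mem_filter, Finset.mem_range] at hmem
      have hle := hmem.2 hmem.1
      have heq : (⟨bN n, hmem.1⟩ : Fin (s+1)) = bF ⟨n, h⟩ := by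
        rw [Fin.ext_iff]
        simp [hbN, dif_pos h]
      rw [heq, ← (hbFspec ⟨n, h⟩).2] at hle
      exact lt_of_lt_of_le hkey.2 hle
  -- lower bound on |A|
  have hAcard : (j : ℕ) + 1 ≤ A.card := by
    have hsub : (Finset.Iic j.castSucc).image (fun m => ((σ m : Fin (s+1)) : ℕ)) ⊆ A := by
      intro n hn
      obtain ⟨m, hm, rfl⟩ := Finset.mem_image.1 hn
      rw [hA, Finset.mem_filter, Finset.mem_range]
      refine ⟨(σ m).isLt, fun h => ?_⟩
      rw [Fin.eta]
      exact le_trans (hσ (Finset.mem_Iic.1 hm)) hcon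
    have hinj2 : Function.Injective (fun m : Fin (s+1) => ((σ m : Fin (s+1)) : ℕ)) :=
      Fin.val_injective.comp σ.injective
    calc (j : ℕ) + 1 = (Finset.Iic j.castSucc).card := by rw [Fin.card_Iic]; rfl
    _ = ((Finset.Iic j.castSucc).image (fun m => ((σ m : Fin (s+1)) : ℕ))).card :=
          (Finset.card_image_of_injective _ hinj2).symm
    _ ≤ A.card := Finset.card_le_card hsub
  -- upper bound on |B|
  have hBcard : B.card ≤ (j : ℕ) := by
    have hsub : B ⊆ (Finset.Iio j).image (fun m => ((τ m : Fin s) : ℕ)) := by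
      intro n hn
      rw [hB, Finset.mem_filter, Finset.mem_range] at hn
      obtain ⟨h, hlt⟩ := hn
      have hlt := hlt h
      refine Finset.mem_image.2 ⟨τ.symm ⟨n, h⟩, Finset.mem_Iio.2 ?_, by
        rw [τ.apply_symm_apply]⟩
      by_contra hle
      push_neg at hle
      have h2 := hτ hle
      simp only [τ.apply_symm_apply] at h2
      rw [← ht] at h2
      exact absurd (lt_of_le_of_lt h2 hlt) (lt_irrefl _)
    calc B.card ≤ ((Finset.Iio j).image (fun m => ((τ m : Fin s) : ℕ))).card :=
          Finset.card_le_card hsub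
    _ = (Finset.Iio j).card := Finset.card_image_of_injective _
          (Fin.val_injective.comp τ.injective)
    _ = (j : ℕ) := Fin.card_Iio j
  have hmain := count_aux s bN hbb s 0 (by omega) (by omega) A hAsub hAne
  have := le_trans hmain (Finset.card_le_card hBsub)
  omega
end

section
/- Let Δ be a simplicial complex whose facets F_1, …, F_{s+1} satisfy F_j ∩ F_{s+1} = F_j ∩ F_s = ⋯ = F_j ∩ F_{j+1} for each 1 ≤ j ≤ s. Then Δ is a quasi-forest with leaf order F_{s+1}, F_s, …, F_1, and moreover Δ is a forest: for any subset {F_{j_1}, …, F_{j_q}} of the facets with j_1 < ⋯ < j_q, the facet F_{j_1} is a leaf of ⟨F_{j_1}, …, F_{j_q}⟩ with branch F_{j_2}. -/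
/-!
The facets form an antichain, so the facets of the subcomplex generated by some of them are
exactly those facets. If `F j₁` has the smallest index among them, the hypothesis makes every
intersection `F k ∩ F j₁` with `k > j₁` the same set, in particular equal to `F j₂ ∩ F j₁`;
hence `F j₁` is a leaf with branch `F j₂`. The leaf order is the case `J = {j, …, s}`.
-/

open Polynomial Finset

theorem mem_gen {Fs : Finset (Finset ℕ)} {G : Finset ℕ} : G ∈ gen Fs ↔ ∃ A ∈ Fs, G ⊆ A := by
  simp only [gen, mem_biUnion, mem_powerset]

theorem isFacet_gen_iff {Fs : Finset (Finset ℕ)} (hFs : IsAntichain (· ⊆ ·) (Fs : Set (Finset ℕ)))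
    {A : Finset ℕ} : IsFacet (gen Fs) A ↔ A ∈ Fs := by
  constructor
  · rintro ⟨hA, hmax⟩
    obtain ⟨B, hB, hAB⟩ := mem_gen.1 hA
    rwa [← hmax B (mem_gen.2 ⟨B, hB, subset_rfl⟩) hAB]
  · intro hA
    refine ⟨mem_gen.2 ⟨A, hA, subset_rfl⟩, fun G hG hAG => ?_⟩
    obtain ⟨B, hB, hGB⟩ := mem_gen.1 hG
    have hAB : A = B := hFs.eq hA hB (hAG.trans hGB)
    exact subset_antisymm (hAB ▸ hGB) hAG

theorem isLeafWithBranch_gen {Fs : Finset (Finset ℕ)}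
    (hFs : IsAntichain (· ⊆ ·) (Fs : Set (Finset ℕ))) {A B : Finset ℕ} (hA : A ∈ Fs) (hB : B ∈ Fs)
    (hBA : B ≠ A) (hbranch : ∀ C ∈ Fs, C ≠ A → C ∩ A ⊆ B ∩ A) :
    IsLeafWithBranch (gen Fs) A B :=
  ⟨(isFacet_gen_iff hFs).2 hA, (isFacet_gen_iff hFs).2 hB, hBA,
    fun C hC hCA => hbranch C ((isFacet_gen_iff hFs).1 hC) hCA⟩

section Forest

variable {s : ℕ} {F : Fin (s + 1) → Finset ℕ}

theorem inter_eq_inter_of_lt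
    (hint : ∀ (i : Fin s) (k : Fin (s + 1)), i.castSucc < k →
      F i.castSucc ∩ F k = F i.castSucc ∩ F i.succ)
    {j k k' : Fin (s + 1)} (hk : j < k) (hk' : j < k') : F j ∩ F k = F j ∩ F k' := by
  have hj : j ≠ Fin.last s := (hk.trans_le (Fin.le_last k)).ne
  rw [← Fin.castSucc_castPred j hj] at hk hk' ⊢
  rw [hint _ _ hk, hint _ _ hk']

theorem isAntichain_image_of_subset_imp_eq (hanti : ∀ j k, F j ⊆ F k → j = k)
    (J : Finset (Fin (s + 1))) : IsAntichain (· ⊆ ·) ((J.image F : Finset _) : Set (Finset ℕ)) := by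
  rintro _ hA _ hB hne hAB
  obtain ⟨j, -, rfl⟩ := mem_image.1 hA
  obtain ⟨k, -, rfl⟩ := mem_image.1 hB
  exact hne (congrArg F (hanti j k hAB))

theorem isLeafWithBranch_gen_image (hanti : ∀ j k, F j ⊆ F k → j = k)
    (hint : ∀ (i : Fin s) (k : Fin (s + 1)), i.castSucc < k →
      F i.castSucc ∩ F k = F i.castSucc ∩ F i.succ)
    {J : Finset (Fin (s + 1))} {j₁ j₂ : Fin (s + 1)} (h₁ : j₁ ∈ J) (h₂ : j₂ ∈ J)
    (h₁₂ : j₁ < j₂) (hmin : ∀ j ∈ J, j₁ ≤ j) :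
    IsLeafWithBranch (gen (J.image F)) (F j₁) (F j₂) := by
  refine isLeafWithBranch_gen (isAntichain_image_of_subset_imp_eq hanti J)
    (mem_image_of_mem F h₁) (mem_image_of_mem F h₂)
    (fun h => h₁₂.ne' (hanti _ _ h.subset)) ?_
  rintro _ hC hCA
  obtain ⟨k, hk, rfl⟩ := mem_image.1 hC
  have hk₁ : j₁ < k := (hmin k hk).lt_of_ne fun h => hCA (h ▸ rfl)
  rw [inter_comm, inter_eq_inter_of_lt hint hk₁ h₁₂, inter_comm]

end Forest

theorem stmt_10_general (s : ℕ) (Δ : Finset (Finset ℕ)) (F : Fin (s + 1) → Finset ℕ)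
    (hinj : Function.Injective F)
    (hfac : ∀ A, IsFacet Δ A ↔ ∃ j, F j = A)
    (hint : ∀ (i : Fin s) (k : Fin (s + 1)), i.castSucc < k →
      F i.castSucc ∩ F k = F i.castSucc ∩ F i.succ) :
    (∀ j : Fin s, IsLeafWithBranch
        (gen ((Finset.univ.filter (fun i => j.castSucc ≤ i)).image F))
        (F j.castSucc) (F j.succ)) ∧
    (∀ (J : Finset (Fin (s + 1))) (j₁ j₂ : Fin (s + 1)), j₁ ∈ J → j₂ ∈ J →
      j₁ < j₂ → (∀ j ∈ J, j₁ ≤ j) → (∀ j ∈ J, j ≠ j₁ → j₂ ≤ j) →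
      IsLeafWithBranch (gen (J.image F)) (F j₁) (F j₂)) := by
  have hanti : ∀ j k, F j ⊆ F k → j = k := fun j k h =>
    hinj (((hfac _).2 ⟨j, rfl⟩).2 _ ((hfac _).2 ⟨k, rfl⟩).1 h).symm
  refine ⟨fun j => ?_, fun J j₁ j₂ h₁ h₂ h₁₂ hmin _ =>
    isLeafWithBranch_gen_image hanti hint h₁ h₂ h₁₂ hmin⟩
  exact isLeafWithBranch_gen_image hanti hint (by simp) (by simp [Fin.castSucc_lt_succ.le])
    Fin.castSucc_lt_succ fun k hk => (mem_filter.1 hk).2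

/-- if the facets `F_1, …, F_{s+1}` of a complex `Δ` satisfy
`F_j ∩ F_{s+1} = ⋯ = F_j ∩ F_{j+1}` for each `1 ≤ j ≤ s` (0-indexed here), then `Δ` is a
quasi-forest with leaf order `F_{s+1}, …, F_1` (each `F_j` is a leaf of
`⟨F_{s+1}, …, F_j⟩` with branch `F_{j+1}`), and moreover `Δ` is a forest: for any subset
of the facets with smallest index `j₁` and second smallest index `j₂`, the facet `F_{j₁}`
is a leaf of the generated subcomplex with branch `F_{j₂}`. -/
theorem stmt_10 (s : ℕ) (Δ : Finset (Finset ℕ)) (F : Fin (s + 1) → Finset ℕ)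
    (hcomp : IsComplex Δ) (hinj : Function.Injective F)
    (hfac : ∀ A, IsFacet Δ A ↔ ∃ j, F j = A)
    (hint : ∀ (i : Fin s) (k : Fin (s + 1)), i.castSucc < k →
      F i.castSucc ∩ F k = F i.castSucc ∩ F i.succ) :
    (∀ j : Fin s, IsLeafWithBranch
        (gen ((Finset.univ.filter (fun i => j.castSucc ≤ i)).image F))
        (F j.castSucc) (F j.succ)) ∧
    (∀ (J : Finset (Fin (s + 1))) (j₁ j₂ : Fin (s + 1)), j₁ ∈ J → j₂ ∈ J →
      j₁ < j₂ → (∀ j ∈ J, j₁ ≤ j) → (∀ j ∈ J, j ≠ j₁ → j₂ ≤ j) →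
      IsLeafWithBranch (gen (J.image F)) (F j₁) (F j₂)) :=
  stmt_10_general s Δ F hinj hfac hint
end

section
/- With (f_{−1},f_0,…,f_{d−1}), (h_0,…,h_d), (c_0,…,c_d) as related by ∑ f_{i−1}(x−1)^{d−i} = ∑ h_i x^{d−i} and ∑ f_{i−1}(x−1)^i = ∑ c_i x^i (f_{−1}=1), define b_k = ∑_{i=k}^{d} c_i. Then for each 1 ≤ k ≤ d, b_k = 1 + ∑_{j=1}^{d} (−1)^{d−k} C(j−1, d−k) h_j. -/
open Polynomial Finset


-- helpers
private lemma np_sub {j d : ℕ} (h : j ≤ d) : (-1:ℤ)^(d-j) = (-1)^d * (-1)^j := by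
  obtain ⟨e, rfl⟩ := Nat.exists_eq_add_of_le h
  rw [Nat.add_sub_cancel_left, pow_add]
  have : ((-1:ℤ)^j) * ((-1:ℤ)^j) = 1 := by
    rw [← pow_add]; exact Even.neg_one_pow ⟨j, rfl⟩
  calc (-1:ℤ)^e = 1 * (-1:ℤ)^e := by ring
    _ = ((-1:ℤ)^j * (-1:ℤ)^j) * (-1:ℤ)^e := by rw [this]
    _ = (-1:ℤ)^j * (-1:ℤ)^e * (-1:ℤ)^j := by ring

private lemma sgn_absorb (n i : ℕ) :
    (-1:ℤ)^(n-i) * (n.choose i : ℤ) = (-1)^n * (-1)^i * (n.choose i : ℤ) := by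
  rcases le_or_gt i n with hle | hlt
  · rw [np_sub hle]
  · simp [Nat.choose_eq_zero_of_lt hlt]

private lemma alt_partial (m M : ℕ) :
    ∑ i ∈ range (M+1), (-1:ℤ)^i * ((m+1).choose i : ℤ) = (-1)^M * (m.choose M : ℤ) := by
  induction M with
  | zero => simp
  | succ M ih =>
    rw [sum_range_succ, ih, Nat.choose_succ_succ]
    push_cast
    ring


-- split lemma: S(n+1, a) = S(n, a) - S(n, a-1)
private lemma sum_split (n a m : ℕ) :
    ∑ r ∈ range (n+2), (-1:ℤ)^r * ((a-r).choose m : ℤ) * ((n+1).choose r : ℤ)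
    = (∑ r ∈ range (n+1), (-1:ℤ)^r * ((a-r).choose m : ℤ) * (n.choose r : ℤ))
      - ∑ r ∈ range (n+1), (-1:ℤ)^r * ((a-1-r).choose m : ℤ) * (n.choose r : ℤ) := by
  have h1 : ∑ r ∈ range (n+2), (-1:ℤ)^r * ((a-r).choose m : ℤ) * ((n+1).choose r : ℤ)
      = (∑ r ∈ range (n+1), (-1:ℤ)^(r+1) * ((a-1-r).choose m : ℤ) * ((n+1).choose (r+1) : ℤ))
        + (a.choose m : ℤ) := by
    rw [Finset.sum_range_succ' (fun r => (-1:ℤ)^r * ((a-r).choose m : ℤ) * ((n+1).choose r : ℤ))]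
    simp [Nat.sub_sub, Nat.add_comm 1]
  have h2 : ∑ r ∈ range (n+2), (-1:ℤ)^r * ((a-r).choose m : ℤ) * (n.choose r : ℤ)
      = (∑ r ∈ range (n+1), (-1:ℤ)^(r+1) * ((a-1-r).choose m : ℤ) * (n.choose (r+1) : ℤ))
        + (a.choose m : ℤ) := by
    rw [Finset.sum_range_succ' (fun r => (-1:ℤ)^r * ((a-r).choose m : ℤ) * (n.choose r : ℤ))]
    simp [Nat.sub_sub, Nat.add_comm 1]
  have h3 : ∑ r ∈ range (n+2), (-1:ℤ)^r * ((a-r).choose m : ℤ) * (n.choose r : ℤ)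
      = ∑ r ∈ range (n+1), (-1:ℤ)^r * ((a-r).choose m : ℤ) * (n.choose r : ℤ) := by
    rw [Finset.sum_range_succ]
    simp [Nat.choose_eq_zero_of_lt (Nat.lt_succ_self n)]
  rw [h1]
  have h4 : ∀ r ∈ range (n+1),
      (-1:ℤ)^(r+1) * ((a-1-r).choose m : ℤ) * ((n+1).choose (r+1) : ℤ)
      = (-1:ℤ)^(r+1) * ((a-1-r).choose m : ℤ) * (n.choose (r+1) : ℤ)
        + (-(-1:ℤ)^r) * ((a-1-r).choose m : ℤ) * (n.choose r : ℤ) := by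
    intro r _
    rw [Nat.choose_succ_succ]
    push_cast
    ring
  rw [Finset.sum_congr rfl h4, Finset.sum_add_distrib]
  have h5 : ∑ r ∈ range (n+1), (-1:ℤ)^(r+1) * ((a-1-r).choose m : ℤ) * (n.choose (r+1) : ℤ)
      = (∑ r ∈ range (n+1), (-1:ℤ)^r * ((a-r).choose m : ℤ) * (n.choose r : ℤ)) - (a.choose m : ℤ) := by
    rw [← h3, h2]; ring
  rw [h5]
  have h6 : ∑ r ∈ range (n+1), (-(-1:ℤ)^r) * ((a-1-r).choose m : ℤ) * (n.choose r : ℤ)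
      = - ∑ r ∈ range (n+1), (-1:ℤ)^r * ((a-1-r).choose m : ℤ) * (n.choose r : ℤ) := by
    rw [← Finset.sum_neg_distrib]; apply Finset.sum_congr rfl; intro r _; ring
  rw [h6]; ring

private lemma U1 : ∀ n m a : ℕ, n ≤ m → n ≤ a →
    ∑ r ∈ range (n+1), (-1:ℤ)^r * ((a-r).choose m : ℤ) * (n.choose r : ℤ)
    = ((a-n).choose (m-n) : ℤ) := by
  intro n
  induction n with
  | zero => intro m a _ _; simp
  | succ n ih =>
    intro m a hnm hna
    rw [sum_split, ih m a (by omega) (by omega), ih m (a-1) (by omega) (by omega)]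
    obtain ⟨p, hp⟩ : ∃ p, a - n = p + 1 := ⟨a - n - 1, by omega⟩
    obtain ⟨q, hq⟩ : ∃ q, m - n = q + 1 := ⟨m - n - 1, by omega⟩
    have e1 : a - 1 - n = p := by omega
    have e2 : a - (n+1) = p := by omega
    have e3 : m - (n+1) = q := by omega
    rw [hp, hq, e1, e2, e3, Nat.choose_succ_succ]
    push_cast
    ring

private lemma U2 : ∀ n m a : ℕ, m < n → n ≤ a →
    ∑ r ∈ range (n+1), (-1:ℤ)^r * ((a-r).choose m : ℤ) * (n.choose r : ℤ)
    = (-1:ℤ)^(a-m) * ((n-m-1).choose (a-m) : ℤ) := by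
  intro n
  induction n with
  | zero => intro m a hm _; omega
  | succ n ih =>
    intro m a hmn hna
    rw [sum_split]
    rcases Nat.lt_or_ge m n with hlt | hge
    · rw [ih m a hlt (by omega), ih m (a-1) hlt (by omega)]
      obtain ⟨p, hp⟩ : ∃ p, a - m = p + 1 := ⟨a - m - 1, by omega⟩
      have e1 : a - 1 - m = p := by omega
      have e2 : n + 1 - m - 1 = (n - m - 1) + 1 := by omega
      rw [hp, e1, e2, Nat.choose_succ_succ]
      have e3 : (-1:ℤ)^(p+1) = -(-1:ℤ)^p := by ring
      push_cast
      ring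
    · have hm : m = n := by omega
      subst hm
      rw [U1 m m a le_rfl (by omega), U1 m m (a-1) le_rfl (by omega)]
      have e2 : m + 1 - m - 1 = 0 := by omega
      have e3 : 0 < a - m := by omega
      simp [e2, Nat.choose_eq_zero_of_lt e3, Nat.sub_self]

private lemma np_sub' {j d : ℕ} (h : j ≤ d) : (-1:ℤ)^(d-j) = (-1)^d * (-1)^j := by
  obtain ⟨e, rfl⟩ := Nat.exists_eq_add_of_le h
  rw [Nat.add_sub_cancel_left, pow_add]
  have h1 : ((-1:ℤ)^j) * ((-1:ℤ)^j) = 1 := by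
    rw [← pow_add]; exact Even.neg_one_pow ⟨j, rfl⟩
  calc (-1:ℤ)^e = 1 * (-1:ℤ)^e := by ring
    _ = ((-1:ℤ)^j * (-1:ℤ)^j) * (-1:ℤ)^e := by rw [h1]
    _ = (-1:ℤ)^j * (-1:ℤ)^e * (-1:ℤ)^j := by ring

private lemma Wlem (d m : ℕ) (hm : m < d) :
    ∑ s ∈ range (d+1), (-1:ℤ)^s * (s.choose m : ℤ) * (d.choose s : ℤ) = 0 := by
  rw [← Finset.sum_range_reflect]
  have h1 : ∀ j ∈ range (d+1),
      (-1:ℤ)^(d+1-1-j) * ((d+1-1-j).choose m : ℤ) * (d.choose (d+1-1-j) : ℤ)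
      = (-1:ℤ)^d * ((-1:ℤ)^j * ((d-j).choose m : ℤ) * (d.choose j : ℤ)) := by
    intro j hj
    have hjd : j ≤ d := by simpa [Nat.lt_succ_iff] using mem_range.mp hj
    have e : d + 1 - 1 - j = d - j := by omega
    rw [e, np_sub' hjd, Nat.choose_symm hjd]
    ring
  rw [Finset.sum_congr rfl h1, ← Finset.mul_sum, U2 d m d hm le_rfl]
  have h2 : d - m - 1 < d - m := by omega
  simp [Nat.choose_eq_zero_of_lt h2]

private lemma Vlem (m : ℕ) : ∀ d, m < d →
    ∑ r ∈ range d, (-1:ℤ)^(r+1) * (r.choose m : ℤ) * (d.choose (r+1) : ℤ) = (-1:ℤ)^(m+1) := by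
  intro d
  induction d with
  | zero => omega
  | succ d ih =>
    intro hm
    rcases Nat.lt_or_ge m d with hlt | hge
    · have h1 : ∀ r ∈ range (d+1),
          (-1:ℤ)^(r+1) * (r.choose m : ℤ) * ((d+1).choose (r+1) : ℤ)
          = (-1:ℤ)^(r+1) * (r.choose m : ℤ) * (d.choose (r+1) : ℤ)
            + -((-1:ℤ)^r * (r.choose m : ℤ) * (d.choose r : ℤ)) := by
        intro r _
        rw [Nat.choose_succ_succ]
        push_cast; ring
      rw [Finset.sum_congr rfl h1, Finset.sum_add_distrib]
      have h2 : ∑ r ∈ range (d+1), -((-1:ℤ)^r * (r.choose m : ℤ) * (d.choose r : ℤ)) = 0 := by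
        rw [Finset.sum_neg_distrib, Wlem d m hlt, neg_zero]
      rw [h2, add_zero, Finset.sum_range_succ, ih hlt]
      have h3 : d < d + 1 := Nat.lt_succ_self d
      rw [Nat.choose_eq_zero_of_lt h3]
      push_cast
      ring
    · have hm' : m = d := by omega
      subst hm'
      rw [Finset.sum_range_succ]
      have h0 : ∀ r ∈ range m, (-1:ℤ)^(r+1) * (r.choose m : ℤ) * ((m+1).choose (r+1) : ℤ) = 0 := by
        intro r hr
        have hrm : r < m := mem_range.mp hr
        rw [Nat.choose_eq_zero_of_lt hrm]
        push_cast; ring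
      rw [Finset.sum_congr rfl h0, Finset.sum_const_zero, zero_add]
      simp

private lemma coreL (d k t : ℕ) (hk1 : 1 ≤ k) (hkd : k ≤ d) (ht1 : 1 ≤ t) (htd : t ≤ d) :
    ∑ i ∈ Icc k d, ((-1:ℤ)^(t-i) * (t.choose i : ℤ))
    = -((-1:ℤ)^t * (-1:ℤ)^(k-1) * ((t-1).choose (k-1) : ℤ)) := by
  obtain ⟨T, rfl⟩ : ∃ T, t = T + 1 := ⟨t-1, by omega⟩
  obtain ⟨K, rfl⟩ : ∃ K, k = K + 1 := ⟨k-1, by omega⟩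
  have habs : ∀ i ∈ Icc (K+1) d, (-1:ℤ)^(T+1-i) * ((T+1).choose i : ℤ)
      = (-1:ℤ)^(T+1) * ((-1:ℤ)^i * ((T+1).choose i : ℤ)) := by
    intro i _; rw [sgn_absorb]; ring
  rw [Finset.sum_congr rfl habs, ← Finset.mul_sum, ← Finset.Ico_add_one_right_eq_Icc,
    Finset.sum_Ico_eq_sub _ (by omega : K + 1 ≤ d + 1)]
  rw [alt_partial T d, alt_partial T K]
  have hTd : T < d := by omega
  rw [Nat.choose_eq_zero_of_lt hTd]
  have e1 : T + 1 - 1 = T := by omega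
  have e2 : K + 1 - 1 = K := by omega
  rw [e1, e2]
  push_cast
  ring

private lemma coreR (d k t : ℕ) (hk1 : 1 ≤ k) (hkd : k ≤ d) (ht1 : 1 ≤ t) (htd : t ≤ d) :
    ∑ j ∈ Icc 1 d, (-1:ℤ)^(d-k) * ((j-1).choose (d-k) : ℤ)
          * ((-1:ℤ)^((d-t)-(d-j)) * ((d-t).choose (d-j) : ℤ))
    = -((-1:ℤ)^t * (-1:ℤ)^(k-1) * ((t-1).choose (k-1) : ℤ)) := by
  -- step 1: absorb signs
  have hterm : ∀ j ∈ Icc 1 d,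
      (-1:ℤ)^(d-k) * ((j-1).choose (d-k) : ℤ) * ((-1:ℤ)^((d-t)-(d-j)) * ((d-t).choose (d-j) : ℤ))
      = ((-1:ℤ)^(d-k) * (-1:ℤ)^(d-t) * (-1:ℤ)^d) *
          ((-1:ℤ)^j * ((j-1).choose (d-k) : ℤ) * ((d-t).choose (d-j) : ℤ)) := by
    intro j hj
    obtain ⟨hj1, hjd⟩ := mem_Icc.mp hj
    have h1 : (-1:ℤ)^((d-t)-(d-j)) * ((d-t).choose (d-j) : ℤ)
        = (-1:ℤ)^(d-t) * (-1:ℤ)^(d-j) * ((d-t).choose (d-j) : ℤ) := sgn_absorb _ _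
    calc (-1:ℤ)^(d-k) * ((j-1).choose (d-k) : ℤ)
            * ((-1:ℤ)^((d-t)-(d-j)) * ((d-t).choose (d-j) : ℤ))
        = (-1:ℤ)^(d-k) * ((j-1).choose (d-k) : ℤ)
            * ((-1:ℤ)^(d-t) * (-1:ℤ)^(d-j) * ((d-t).choose (d-j) : ℤ)) := by rw [h1]
      _ = ((-1:ℤ)^(d-k) * (-1:ℤ)^(d-t) * (-1:ℤ)^d) *
          ((-1:ℤ)^j * ((j-1).choose (d-k) : ℤ) * ((d-t).choose (d-j) : ℤ)) := by
          rw [np_sub' hjd]; ring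
  rw [Finset.sum_congr rfl hterm, ← Finset.mul_sum]
  -- step 2: reindex j = 1 + i then reflect
  rw [← Finset.Ico_add_one_right_eq_Icc, Finset.sum_Ico_eq_sum_range]
  have e0 : d + 1 - 1 = d := by omega
  rw [e0, ← Finset.sum_range_reflect]
  have hterm2 : ∀ i ∈ range d,
      (-1:ℤ)^(1+(d-1-i)) * (((1+(d-1-i))-1).choose (d-k) : ℤ) * ((d-t).choose (d-(1+(d-1-i))) : ℤ)
      = (-1:ℤ)^d * ((-1:ℤ)^i * ((d-1-i).choose (d-k) : ℤ) * ((d-t).choose i : ℤ)) := by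
    intro i hi
    have hid : i < d := mem_range.mp hi
    have e1 : 1+(d-1-i) = d - i := by omega
    have e2 : (1+(d-1-i))-1 = d-1-i := by omega
    have e3 : d - (1+(d-1-i)) = i := by omega
    rw [e2, e3, e1, np_sub' (by omega : i ≤ d)]
    ring
  rw [Finset.sum_congr rfl hterm2, ← Finset.mul_sum]
  -- step 3: restrict range d to range (d-t+1)
  have hsub : ∑ i ∈ range d, (-1:ℤ)^i * ((d-1-i).choose (d-k):ℤ) * ((d-t).choose i : ℤ)
      = ∑ i ∈ range (d-t+1), (-1:ℤ)^i * ((d-1-i).choose (d-k):ℤ) * ((d-t).choose i : ℤ) := by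
    symm
    apply Finset.sum_subset
    · intro x hx
      simp only [mem_range] at *
      omega
    · intro x hx hnx
      simp only [mem_range] at hx hnx
      have hlt : d - t < x := by omega
      rw [Nat.choose_eq_zero_of_lt hlt]
      push_cast; ring
  rw [hsub]
  -- step 4: apply U1 / U2
  have sqd : (-1:ℤ)^d * (-1:ℤ)^d = 1 := by
    rw [← pow_add]; exact Even.neg_one_pow ⟨d, rfl⟩
  rcases le_or_gt k t with hkt | htk
  · rw [U1 (d-t) (d-k) (d-1) (by omega) (by omega)]
    have e4 : d-1-(d-t) = t-1 := by omega
    have e5 : (d-k)-(d-t) = t-k := by omega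
    rw [e4, e5]
    have e6 : (t-1).choose (t-k) = (t-1).choose (k-1) := by
      have : t - k = (t-1) - (k-1) := by omega
      rw [this, Nat.choose_symm (by omega : k-1 ≤ t-1)]
    rw [e6, np_sub' hkd, np_sub' htd]
    obtain ⟨K, rfl⟩ : ∃ K, k = K + 1 := ⟨k-1, by omega⟩
    have e7 : K + 1 - 1 = K := by omega
    rw [e7, pow_succ]
    linear_combination (-(((-1:ℤ)^d*(-1:ℤ)^d + 1) * ((-1:ℤ)^K * (-1:ℤ)^t * (((t-1).choose K : ℕ) : ℤ)))) * sqd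
  · rw [U2 (d-t) (d-k) (d-1) (by omega) (by omega)]
    have e4 : (d-t)-(d-k)-1 = k-t-1 := by omega
    have e5 : (d-1)-(d-k) = k-1 := by omega
    rw [e4, e5, Nat.choose_eq_zero_of_lt (by omega : k-t-1 < k-1),
      Nat.choose_eq_zero_of_lt (by omega : t-1 < k-1)]
    push_cast; ring


private lemma core (d k t : ℕ) (hk1 : 1 ≤ k) (hkd : k ≤ d) (htd : t ≤ d) :
    ∑ i ∈ Icc k d, ((-1:ℤ)^(t-i) * (t.choose i : ℤ))
    = (if t = 0 then 1 else 0)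
      + ∑ j ∈ Icc 1 d, (-1:ℤ)^(d-k) * ((j-1).choose (d-k) : ℤ)
          * ((-1:ℤ)^((d-t)-(d-j)) * ((d-t).choose (d-j) : ℤ)) := by
  rcases Nat.eq_zero_or_pos t with rfl | ht1
  · have hL : (∑ i ∈ Icc k d, ((-1:ℤ)^(0-i) * ((0:ℕ).choose i : ℤ))) = 0 := by
      apply Finset.sum_eq_zero
      intro i hi
      have h0 : 0 < i := lt_of_lt_of_le hk1 (mem_Icc.mp hi).1
      rw [Nat.choose_eq_zero_of_lt h0]
      push_cast; ring
    rw [hL, if_pos rfl]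
    have hterm : ∀ j ∈ Icc 1 d,
        (-1:ℤ)^(d-k) * ((j-1).choose (d-k) : ℤ) * ((-1:ℤ)^((d-0)-(d-j)) * ((d-0).choose (d-j) : ℤ))
        = (-1:ℤ)^(d-k) * ((-1:ℤ)^j * ((j-1).choose (d-k) : ℤ) * (d.choose j : ℤ)) := by
      intro j hj
      obtain ⟨hj1, hjd⟩ := mem_Icc.mp hj
      have e1 : d - 0 = d := by omega
      have e2 : d - (d-j) = j := by omega
      rw [e1, e2, Nat.choose_symm hjd]
      ring
    rw [Finset.sum_congr rfl hterm, ← Finset.mul_sum, ← Finset.Ico_add_one_right_eq_Icc,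
        Finset.sum_Ico_eq_sum_range]
    have e0 : d + 1 - 1 = d := by omega
    rw [e0]
    have hterm2 : ∀ r ∈ range d,
        (-1:ℤ)^(1+r) * (((1+r)-1).choose (d-k) : ℤ) * (d.choose (1+r) : ℤ)
        = (-1:ℤ)^(r+1) * (r.choose (d-k) : ℤ) * (d.choose (r+1) : ℤ) := by
      intro r _
      have e1 : 1 + r - 1 = r := by omega
      have e2 : 1 + r = r + 1 := by omega
      rw [e1, e2]
    rw [Finset.sum_congr rfl hterm2, Vlem (d-k) d (by omega)]
    have sq : (-1:ℤ)^(d-k) * (-1:ℤ)^(d-k) = 1 := by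
      rw [← pow_add]; exact Even.neg_one_pow ⟨d-k, rfl⟩
    linear_combination sq
  · rw [if_neg (by omega), coreL d k t hk1 hkd ht1 htd, coreR d k t hk1 hkd ht1 htd]
    ring

/-- with `f`, `h`, `c` as in Statement 13 and `b_k = ∑_{i=k}^d c_i`,
one has `b_k = 1 + ∑_{j=1}^d (-1)^{d-k} C(j-1, d-k) h_j` for each `1 ≤ k ≤ d`. -/
theorem stmt_14 (d : ℕ) (f h c b : ℕ → ℤ) (hf : f 0 = 1)
    (hh : ∑ i ∈ Finset.range (d + 1), Polynomial.C (f i) * (Polynomial.X - 1) ^ (d - i)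
      = ∑ i ∈ Finset.range (d + 1), Polynomial.C (h i) * Polynomial.X ^ (d - i))
    (hc : ∑ i ∈ Finset.range (d + 1), Polynomial.C (f i) * (Polynomial.X - 1) ^ i
      = ∑ i ∈ Finset.range (d + 1), Polynomial.C (c i) * Polynomial.X ^ i)
    (hb : ∀ k, b k = ∑ i ∈ Finset.Icc k d, c i) :
    ∀ k, 1 ≤ k → k ≤ d →
      b k = 1 + ∑ j ∈ Finset.Icc 1 d,
        (-1 : ℤ) ^ (d - k) * ((j - 1).choose (d - k) : ℤ) * h j := by
  intro k hk1 hkd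
  have hXpow : ∀ (n i : ℕ), ((Polynomial.X - 1 : Polynomial ℤ)^n).coeff i
      = (-1:ℤ)^(n-i) * (n.choose i : ℤ) := by
    intro n i
    have hX1 : (Polynomial.X - 1 : Polynomial ℤ) = Polynomial.X + Polynomial.C (-1) := by
      rw [Polynomial.C_neg, Polynomial.C_1]; ring
    rw [hX1, Polynomial.coeff_X_add_C_pow]
  have hcf : ∀ i, i ≤ d → c i = ∑ u ∈ range (d+1), f u * ((-1:ℤ)^(u-i) * (u.choose i : ℤ)) := by
    intro i hid
    have h1 := congrArg (fun p : Polynomial ℤ => p.coeff i) hc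
    simp only [Polynomial.finset_sum_coeff, Polynomial.coeff_C_mul, Polynomial.coeff_X_pow,
      hXpow, mul_ite, mul_one, mul_zero, Finset.sum_ite_eq] at h1
    rw [if_pos (mem_range.mpr (by omega : i < d+1))] at h1
    exact h1.symm
  have hhf : ∀ j, 1 ≤ j → j ≤ d → h j
      = ∑ u ∈ range (d+1), f u * ((-1:ℤ)^((d-u)-(d-j)) * ((d-u).choose (d-j) : ℤ)) := by
    intro j hj1 hjd
    have h1 := congrArg (fun p : Polynomial ℤ => p.coeff (d - j)) hh
    simp only [Polynomial.finset_sum_coeff, Polynomial.coeff_C_mul, Polynomial.coeff_X_pow,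
      hXpow, mul_ite, mul_one, mul_zero] at h1
    have h2 : ∑ u ∈ range (d+1), (if d - j = d - u then h u else 0)
        = ∑ u ∈ range (d+1), (if j = u then h u else 0) := by
      apply Finset.sum_congr rfl
      intro u hu
      have hud : u ≤ d := by simpa [Nat.lt_succ_iff] using mem_range.mp hu
      by_cases he : j = u
      · subst he; simp
      · have hne : d - j ≠ d - u := by omega
        simp [he, hne]
    rw [h2, Finset.sum_ite_eq, if_pos (mem_range.mpr (by omega : j < d+1))] at h1
    exact h1.symm
  rw [hb k]
  calc ∑ i ∈ Icc k d, c i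
      = ∑ i ∈ Icc k d, ∑ u ∈ range (d+1), f u * ((-1:ℤ)^(u-i) * (u.choose i : ℤ)) := by
        apply Finset.sum_congr rfl; intro i hi; exact hcf i (mem_Icc.mp hi).2
    _ = ∑ u ∈ range (d+1), f u * ∑ i ∈ Icc k d, ((-1:ℤ)^(u-i) * (u.choose i : ℤ)) := by
        rw [Finset.sum_comm]
        apply Finset.sum_congr rfl; intro u _
        rw [Finset.mul_sum]
    _ = ∑ u ∈ range (d+1), f u * ((if u = 0 then 1 else 0)
          + ∑ j ∈ Icc 1 d, (-1:ℤ)^(d-k) * ((j-1).choose (d-k) : ℤ)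
              * ((-1:ℤ)^((d-u)-(d-j)) * ((d-u).choose (d-j) : ℤ))) := by
        apply Finset.sum_congr rfl; intro u hu
        have hud : u ≤ d := by simpa [Nat.lt_succ_iff] using mem_range.mp hu
        rw [core d k u hk1 hkd hud]
    _ = 1 + ∑ j ∈ Icc 1 d, (-1:ℤ)^(d-k) * ((j-1).choose (d-k) : ℤ) * h j := by
        simp only [mul_add, Finset.sum_add_distrib]
        have hA : ∑ u ∈ range (d+1), f u * (if u = 0 then (1:ℤ) else 0) = 1 := by
          simp [mul_ite, Finset.sum_ite_eq', hf]
        have hB : ∑ u ∈ range (d+1), f u * (∑ j ∈ Icc 1 d, (-1:ℤ)^(d-k) * ((j-1).choose (d-k):ℤ)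
              * ((-1:ℤ)^((d-u)-(d-j)) * ((d-u).choose (d-j):ℤ)))
            = ∑ j ∈ Icc 1 d, (-1:ℤ)^(d-k) * ((j-1).choose (d-k):ℤ) * h j := by
          have hswap : ∀ u ∈ range (d+1), f u * (∑ j ∈ Icc 1 d, (-1:ℤ)^(d-k) * ((j-1).choose (d-k):ℤ)
                * ((-1:ℤ)^((d-u)-(d-j)) * ((d-u).choose (d-j):ℤ)))
              = ∑ j ∈ Icc 1 d, (-1:ℤ)^(d-k) * ((j-1).choose (d-k):ℤ)
                * (f u * ((-1:ℤ)^((d-u)-(d-j)) * ((d-u).choose (d-j):ℤ))) := by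
            intro u _
            rw [Finset.mul_sum]
            apply Finset.sum_congr rfl; intro j _; ring
          rw [Finset.sum_congr rfl hswap, Finset.sum_comm]
          apply Finset.sum_congr rfl; intro j hj
          obtain ⟨hj1, hjd⟩ := mem_Icc.mp hj
          rw [hhf j hj1 hjd, Finset.mul_sum]
        rw [hA, hB]
end
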